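/- Let p ≥ 0, β ∈ (0, 2], W(x) = |x|^p·e^{|x|^β}, and g_a(y) = (a/π)^{1/4}·e^{−a y²/2}. Then for every μ > 1 there exists a₀ > 0 such that for all a ≥ a₀ and all x ∈ ℝ, (W ∗ g_a²)(x) ≤ 2·(W(μ·x) + 1). -/

import Mathlib

open MeasureTheory Real

/-- The `L²`-normalised gaussian `g_a(y) = (a/π)^{1/4} e^{-a y²/2}`. -/
noncomputable def gauss (a y : ℝ) : ℝ := (a / π) ^ ((1 : ℝ) / 4) * Real.exp (-a * y ^ 2 / 2)

/-!
Since `|x - y| ≤ max (μ|x|) (D|y|)` with `D = μ/(μ-1)` and `W` is monotone in `|t|`,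
`W(x - y) ≤ W(μx) + W(Dy)`. As `g_a²` has unit mass and concentrates at `0` when `a → ∞`,
`∫ W(Dy) g_a²(y) dy → W(0) ≤ 1`; dominated convergence applies because `β ≤ 2` gives
`W(t) ≤ C e^{2t²}`, which `g_a²` absorbs once `a > 2D²`.
-/

open Filter Topology

lemma gauss_sq (a y : ℝ) (ha : 0 ≤ a) : gauss a y ^ 2 = √(a / π) * exp (-a * y ^ 2) := by
  have hroot : ((a / π) ^ ((1 : ℝ) / 4)) ^ 2 = √(a / π) := by
    rw [← rpow_natCast, ← rpow_mul (by positivity), sqrt_eq_rpow]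
    norm_num
  rw [gauss, mul_pow, hroot, ← exp_nat_mul]
  ring_nf

lemma continuous_gauss (a : ℝ) : Continuous (gauss a) := by
  unfold gauss; fun_prop

lemma integrable_gauss_sq {a : ℝ} (ha : 0 < a) : Integrable (fun y ↦ gauss a y ^ 2) := by
  simp_rw [gauss_sq _ _ ha.le]
  exact (integrable_exp_neg_mul_sq ha).const_mul _

lemma integral_gauss_sq {a : ℝ} (ha : 0 < a) : ∫ y, gauss a y ^ 2 = 1 := by
  simp_rw [gauss_sq _ _ ha.le]
  rw [integral_const_mul, integral_gaussian, ← sqrt_mul (by positivity)]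
  field_simp
  simp

lemma gauss_sq_div_sqrt {a : ℝ} (ha : 0 < a) (z : ℝ) :
    gauss a (z / √a) ^ 2 = √a * gauss 1 z ^ 2 := by
  rw [gauss_sq _ _ ha.le, gauss_sq _ _ zero_le_one, div_pow, sq_sqrt ha.le,
    sqrt_div' _ pi_pos.le, one_div, sqrt_inv]
  field_simp

lemma integral_mul_gauss_sq_eq_rescale (f : ℝ → ℝ) {a : ℝ} (ha : 0 < a) :
    ∫ y, f y * gauss a y ^ 2 = ∫ z, f (z / √a) * gauss 1 z ^ 2 := by
  have hsa : 0 < √a := sqrt_pos.2 ha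
  have h := Measure.integral_comp_div (fun y ↦ f y * gauss a y ^ 2) √a
  simp only [gauss_sq_div_sqrt ha, mul_left_comm _ √a, integral_const_mul, abs_of_pos hsa,
    smul_eq_mul] at h
  exact (mul_left_cancel₀ hsa.ne' h).symm

section ApproximateIdentity

variable {f : ℝ → ℝ} {A B : ℝ}

lemma integrable_mul_gauss_sq (hf : Continuous f) (hbound : ∀ y, |f y| ≤ A * exp (B * y ^ 2))
    {a : ℝ} (ha : 0 < a) (hBa : B < a) : Integrable (fun y ↦ f y * gauss a y ^ 2) := by
  have hdom : Integrable (fun y ↦ A * √(a / π) * exp (-(a - B) * y ^ 2)) :=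
    (integrable_exp_neg_mul_sq (sub_pos.2 hBa)).const_mul _
  refine hdom.mono' (hf.mul ((continuous_gauss a).pow 2)).aestronglyMeasurable
    (Eventually.of_forall fun y ↦ ?_)
  have hsplit : exp (-(a - B) * y ^ 2) = exp (B * y ^ 2) * exp (-a * y ^ 2) := by
    rw [← exp_add]; ring_nf
  rw [norm_mul, norm_of_nonneg (sq_nonneg _), norm_eq_abs, hsplit]
  calc |f y| * gauss a y ^ 2 ≤ A * exp (B * y ^ 2) * gauss a y ^ 2 := by gcongr; exact hbound y
    _ = _ := by rw [gauss_sq _ _ ha.le]; ring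

lemma tendsto_integral_mul_gauss_sq (hf : Continuous f)
    (hbound : ∀ y, |f y| ≤ A * exp (B * y ^ 2)) :
    Tendsto (fun a ↦ ∫ y, f y * gauss a y ^ 2) atTop (𝓝 (f 0)) := by
  have hA : 0 ≤ A := by simpa using (abs_nonneg _).trans (hbound 0)
  have hlim : Tendsto (fun a ↦ ∫ z, f (z / √a) * gauss 1 z ^ 2) atTop
      (𝓝 (∫ z, f 0 * gauss 1 z ^ 2)) := by
    refine tendsto_integral_filter_of_dominated_convergence
      (fun z ↦ A * exp (1 / 2 * z ^ 2) * gauss 1 z ^ 2) ?_ ?_ ?_ ?_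
    · exact .of_forall fun a ↦ ((hf.comp (continuous_id.div_const _)).mul
        ((continuous_gauss 1).pow 2)).aestronglyMeasurable
    · filter_upwards [eventually_gt_atTop 0, eventually_ge_atTop (2 * B)] with a ha hBa
      refine Eventually.of_forall fun z ↦ ?_
      have hBa' : B / a ≤ 1 / 2 := by rw [div_le_iff₀ ha]; linarith
      rw [norm_mul, norm_of_nonneg (sq_nonneg _), norm_eq_abs]
      gcongr
      calc |f (z / √a)| ≤ A * exp (B / a * z ^ 2) := by
            convert hbound (z / √a) using 3; rw [div_pow, sq_sqrt ha.le]; ring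
        _ ≤ A * exp (1 / 2 * z ^ 2) := by gcongr
    · exact integrable_mul_gauss_sq (A := A) (by fun_prop)
        (fun z ↦ (abs_of_nonneg (by positivity)).le) one_pos (by norm_num)
    · exact Eventually.of_forall fun z ↦
        ((hf.tendsto 0).comp (tendsto_const_nhds.div_atTop tendsto_sqrt_atTop)).mul_const _
  rw [integral_const_mul, integral_gauss_sq one_pos, mul_one] at hlim
  refine hlim.congr' ?_
  filter_upwards [eventually_gt_atTop 0] with a ha
  exact (integral_mul_gauss_sq_eq_rescale f ha).symm

end ApproximateIdentity

/-- The potential `W(t) = |t|^p e^{|t|^β}`. -/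
noncomputable def expPotential (p β t : ℝ) : ℝ := |t| ^ p * exp (|t| ^ β)

section ExpPotential

variable {p β : ℝ}

lemma expPotential_nonneg (p β t : ℝ) : 0 ≤ expPotential p β t := by
  unfold expPotential; positivity

lemma continuous_expPotential (hp : 0 ≤ p) (hβ : 0 ≤ β) : Continuous (expPotential p β) := by
  unfold expPotential
  exact (continuous_abs.rpow_const fun _ ↦ Or.inr hp).mul
    (continuous_abs.rpow_const fun _ ↦ Or.inr hβ).rexp

lemma expPotential_le_of_abs_le (hp : 0 ≤ p) (hβ : 0 ≤ β) {s t : ℝ} (h : |s| ≤ |t|) :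
    expPotential p β s ≤ expPotential p β t := by
  unfold expPotential; gcongr

lemma expPotential_zero_le_one (hβ : 0 < β) : expPotential p β 0 ≤ 1 := by
  simpa [expPotential, zero_rpow hβ.ne'] using zero_rpow_le_one p

lemma expPotential_le_exp (hp : 0 ≤ p) (hβ : 0 ≤ β) (hβ2 : β ≤ 2) (t : ℝ) :
    expPotential p β t ≤ exp (p ^ 2 + 1) * exp (2 * t ^ 2) := by
  have hpow : |t| ^ p ≤ exp (|t| * p) := by
    rw [exp_mul]; gcongr; linarith [add_one_le_exp |t|]
  have hrpow : |t| ^ β ≤ 1 + t ^ 2 := by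
    rcases le_total |t| 1 with h | h
    · linarith [rpow_le_one (abs_nonneg t) h hβ, sq_nonneg t]
    · have := rpow_le_rpow_of_exponent_le h hβ2
      rw [rpow_two, sq_abs] at this
      linarith
  calc expPotential p β t ≤ exp (|t| * p) * exp (1 + t ^ 2) := by unfold expPotential; gcongr
    _ ≤ exp (p ^ 2 + 1) * exp (2 * t ^ 2) := by
      rw [← exp_add, ← exp_add, exp_le_exp]; nlinarith [sq_nonneg (|t| - p), sq_abs t]

lemma abs_sub_le_max_abs_mul {μ : ℝ} (hμ : 1 < μ) (x y : ℝ) :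
    |x - y| ≤ max |μ * x| |μ / (μ - 1) * y| := by
  have hμ0 : 0 < μ := by linarith
  have hμ1 : 0 < μ - 1 := sub_pos.2 hμ
  rw [abs_mul, abs_mul, abs_of_pos hμ0, abs_of_pos (div_pos hμ0 hμ1)]
  refine (abs_sub _ _).trans ?_
  rcases le_total |y| ((μ - 1) * |x|) with h | h
  · exact le_max_of_le_left (by linarith)
  · refine le_max_of_le_right ?_
    rw [div_mul_eq_mul_div, le_div_iff₀ hμ1]
    nlinarith

lemma expPotential_sub_le (hp : 0 ≤ p) (hβ : 0 ≤ β) {μ : ℝ} (hμ : 1 < μ) (x y : ℝ) :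
    expPotential p β (x - y) ≤
      expPotential p β (μ * x) + expPotential p β (μ / (μ - 1) * y) := by
  rcases le_max_iff.1 (abs_sub_le_max_abs_mul hμ x y) with h | h
  · exact (expPotential_le_of_abs_le hp hβ h).trans
      (le_add_of_nonneg_right (expPotential_nonneg ..))
  · exact (expPotential_le_of_abs_le hp hβ h).trans
      (le_add_of_nonneg_left (expPotential_nonneg ..))

end ExpPotential

/-- For `W(x) = |x|^p e^{|x|^β}` and every `μ > 1` there is `a₀ > 0` such that
`(W ∗ g_a²)(x) ≤ 2 (W(μx) + 1)` for all `a ≥ a₀` and all `x`. -/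
theorem exponential_potential_convolution_bound (p β : ℝ) (hp : 0 ≤ p) (hβ0 : 0 < β)
    (hβ2 : β ≤ 2) (μ : ℝ) (hμ : 1 < μ) :
    ∃ a₀ : ℝ, 0 < a₀ ∧ ∀ a : ℝ, a₀ ≤ a → ∀ x : ℝ,
      (∫ y : ℝ, (|x - y| ^ p * Real.exp (|x - y| ^ β)) * gauss a y ^ 2)
        ≤ 2 * (|μ * x| ^ p * Real.exp (|μ * x| ^ β) + 1) := by
  set D := μ / (μ - 1)
  set V : ℝ → ℝ := fun y ↦ expPotential p β (D * y)
  have hV : Continuous V := (continuous_expPotential hp hβ0.le).comp (continuous_const_mul D)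
  have hVbound (y : ℝ) : |V y| ≤ exp (p ^ 2 + 1) * exp (2 * D ^ 2 * y ^ 2) := by
    rw [abs_of_nonneg (expPotential_nonneg ..)]
    convert expPotential_le_exp hp hβ0.le hβ2 (D * y) using 3
    ring
  have hV0 : V 0 < 2 := by
    simp only [V, mul_zero]; linarith [expPotential_zero_le_one (p := p) hβ0]
  obtain ⟨a₀, ha₀⟩ := eventually_atTop.1 <|
    ((tendsto_integral_mul_gauss_sq hV hVbound).eventually (gt_mem_nhds hV0)).and
      ((eventually_gt_atTop 0).and (eventually_gt_atTop (2 * D ^ 2)))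
  refine ⟨a₀, (ha₀ a₀ le_rfl).2.1, fun a ha x ↦ ?_⟩
  obtain ⟨hVa, ha0, hDa⟩ := ha₀ a ha
  have hWint := (integrable_gauss_sq ha0).const_mul (expPotential p β (μ * x))
  have hVint := integrable_mul_gauss_sq hV hVbound ha0 hDa
  change ∫ y, expPotential p β (x - y) * gauss a y ^ 2 ≤ 2 * (expPotential p β (μ * x) + 1)
  calc ∫ y, expPotential p β (x - y) * gauss a y ^ 2
      ≤ ∫ y, (expPotential p β (μ * x) * gauss a y ^ 2 + V y * gauss a y ^ 2) := by
        refine integral_mono_of_nonneg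
          (.of_forall fun y ↦ mul_nonneg (expPotential_nonneg ..) (sq_nonneg _))
          (hWint.add hVint) (.of_forall fun y ↦ ?_)
        simpa only [← add_mul] using
          mul_le_mul_of_nonneg_right (expPotential_sub_le hp hβ0.le hμ x y) (sq_nonneg _)
    _ = expPotential p β (μ * x) + ∫ y, V y * gauss a y ^ 2 := by
        rw [integral_add hWint hVint, integral_const_mul, integral_gauss_sq ha0, mul_one]
    _ ≤ 2 * (expPotential p β (μ * x) + 1) := by
        linarith [expPotential_nonneg p β (μ * x)]
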